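/- arXiv:2103.03032 — 14 statements merged into one kernel-verified Lean document; each statement's English description precedes it below -/
import Mathlib

section
/- If every agent occurring in a formula φ colours some vertex of the simplex X (A_φ ⊆ χ(X)), then φ is defined in X (C,X ⋈ φ). -/
/-- Epistemic language: atoms `p_a` (indexed by agent and a natural number),
negation, conjunction, and the possibility modality `K̂_a`. -/
inductive Form (A : Type) : Type
  | atom : A → ℕ → Form A
  | neg : Form A → Form A
  | and : Form A → Form A → Form A
  | hatK : A → Form A → Form A

/-- A chromatic simplicial model: a simplicial complex of finite sets of vertices,
a colouring `χ` that is injective on each simplex, and a valuation `val`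
assigning local variables (of agent `χ v`) to each vertex `v`. -/
structure SimpModel (A V : Type) where
  C : Set (Finset V)
  nonempty_mem : ∀ X ∈ C, X.Nonempty
  down_closed : ∀ X ∈ C, ∀ Y : Finset V, Y ⊆ X → Y.Nonempty → Y ∈ C
  singletons : ∀ v : V, {v} ∈ C
  χ : V → A
  chromatic : ∀ X ∈ C, ∀ v ∈ X, ∀ w ∈ X, χ v = χ w → v = w
  val : V → Set ℕ

namespace Form

/-- Definability relation `C,X ⋈ φ`. -/
def defd {A V : Type} (M : SimpModel A V) : Form A → Finset V → Prop
  | atom a _, X => ∃ v ∈ X, M.χ v = a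
  | neg φ, X => φ.defd M X
  | and φ ψ, X => φ.defd M X ∧ ψ.defd M X
  | hatK a φ, X => ∃ Y ∈ M.C, (∃ v ∈ X, v ∈ Y ∧ M.χ v = a) ∧ φ.defd M Y

/-- Satisfaction relation `C,X ⊨ φ`. -/
def sat {A V : Type} (M : SimpModel A V) : Form A → Finset V → Prop
  | atom a p, X => ∃ v ∈ X, M.χ v = a ∧ p ∈ M.val v
  | neg φ, X => φ.defd M X ∧ ¬ φ.sat M X
  | and φ ψ, X => φ.sat M X ∧ ψ.sat M X
  | hatK a φ, X => ∃ Y ∈ M.C, (∃ v ∈ X, v ∈ Y ∧ M.χ v = a) ∧ φ.sat M Y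

/-- Knowledge `K_a φ := ¬K̂_a ¬φ`. -/
def K {A : Type} (a : A) (φ : Form A) : Form A := neg (hatK a (neg φ))

/-- Disjunction `φ ∨ ψ := ¬(¬φ ∧ ¬ψ)`. -/
def or' {A : Type} (φ ψ : Form A) : Form A := neg (and (neg φ) (neg ψ))

/-- Implication `φ → ψ := ¬(φ ∧ ¬ψ)`. -/
def imp {A : Type} (φ ψ : Form A) : Form A := neg (and φ (neg ψ))

/-- The equidefinable valid companion `φ^⊤`. -/
def top {A : Type} : Form A → Form A
  | atom a p => or' (atom a p) (neg (atom a p))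
  | neg φ => top φ
  | and φ ψ => and (top φ) (top ψ)
  | hatK a φ => hatK a (top φ)

/-- The set `A_φ` of agents occurring in `φ`. -/
def agents {A : Type} : Form A → Set A
  | atom a _ => {a}
  | neg φ => agents φ
  | and φ ψ => agents φ ∪ agents ψ
  | hatK a φ => agents φ ∪ {a}

/-- Validity: true wherever defined, in every pointed simplicial model. -/
def Valid {A : Type} (φ : Form A) : Prop :=
  ∀ (V : Type) (M : SimpModel A V) (X : Finset V), X ∈ M.C → φ.defd M X → φ.sat M X

/-- Semantic equivalence: same truth, same falsity, same definability everywhere. -/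
def Equiv' {A : Type} (φ ψ : Form A) : Prop :=
  ∀ (V : Type) (M : SimpModel A V) (X : Finset V), X ∈ M.C →
    ((φ.sat M X ↔ ψ.sat M X) ∧ ((neg φ).sat M X ↔ (neg ψ).sat M X) ∧
      (φ.defd M X ↔ ψ.defd M X))

end Form

theorem agents_subset_defd {A V : Type} (M : SimpModel A V) (X : Finset V) (φ : Form A)
    (hX : X ∈ M.C) (h : ∀ a ∈ φ.agents, ∃ v ∈ X, M.χ v = a) : φ.defd M X := by
  induction φ with
  | atom a p => exact h a (by simp [Form.agents])
  | neg φ ih => exact ih (fun a ha => h a ha)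
  | and φ ψ ihφ ihψ =>
      exact ⟨ihφ (fun a ha => h a (Or.inl ha)), ihψ (fun a ha => h a (Or.inr ha))⟩
  | hatK a φ ih =>
      obtain ⟨v, hv, hχ⟩ := h a (Or.inr rfl)
      exact ⟨X, hX, ⟨v, hv, hv, hχ⟩, ih (fun b hb => h b (Or.inl hb))⟩
end

section
/- If φ is equivalent to ψ (same definability and same truth value in every pointed simplicial model), then for any formula ξ and propositional variable p, the uniform substitution instances ξ[p/φ] and ξ[p/ψ] are equivalent. -/
/-- Uniform substitution of a formula for the variable `p_a` (the `q`-th variable of agent `a`). -/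
def Form.subst {A : Type} [DecidableEq A] (a : A) (q : ℕ) (χ : Form A) : Form A → Form A
  | Form.atom b r => if b = a ∧ r = q then χ else Form.atom b r
  | Form.neg φ => Form.neg (Form.subst a q χ φ)
  | Form.and φ ψ => Form.and (Form.subst a q χ φ) (Form.subst a q χ ψ)
  | Form.hatK b φ => Form.hatK b (Form.subst a q χ φ)

theorem equiv_subst {A : Type} [DecidableEq A] (a : A) (q : ℕ) (φ ψ ξ : Form A)
    (h : Form.Equiv' φ ψ) :
    Form.Equiv' (Form.subst a q φ ξ) (Form.subst a q ψ ξ) := by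
  have key : ∀ (ξ : Form A) (V : Type) (M : SimpModel A V) (X : Finset V), X ∈ M.C →
      (((Form.subst a q φ ξ).sat M X ↔ (Form.subst a q ψ ξ).sat M X) ∧
        ((Form.subst a q φ ξ).defd M X ↔ (Form.subst a q ψ ξ).defd M X)) := by
    intro ξ
    induction ξ with
    | atom b r =>
      intro V M X hX
      by_cases hc : b = a ∧ r = q
      · simp only [Form.subst, if_pos hc]
        exact ⟨(h V M X hX).1, (h V M X hX).2.2⟩
      · simp [Form.subst, if_neg hc]
    | neg ξ ih =>
      intro V M X hX
      obtain ⟨hs, hd⟩ := ih V M X hX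
      simp only [Form.subst, Form.sat, Form.defd]
      exact ⟨by rw [hs, hd], hd⟩
    | and ξ₁ ξ₂ ih₁ ih₂ =>
      intro V M X hX
      obtain ⟨hs₁, hd₁⟩ := ih₁ V M X hX
      obtain ⟨hs₂, hd₂⟩ := ih₂ V M X hX
      simp only [Form.subst, Form.sat, Form.defd]
      exact ⟨by rw [hs₁, hs₂], by rw [hd₁, hd₂]⟩
    | hatK b ξ ih =>
      intro V M X hX
      simp only [Form.subst, Form.sat, Form.defd]
      constructor
      · constructor <;> rintro ⟨Y, hY, hv, hφ⟩
        · exact ⟨Y, hY, hv, ((ih V M Y hY).1).mp hφ⟩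
        · exact ⟨Y, hY, hv, ((ih V M Y hY).1).mpr hφ⟩
      · constructor <;> rintro ⟨Y, hY, hv, hφ⟩
        · exact ⟨Y, hY, hv, ((ih V M Y hY).2).mp hφ⟩
        · exact ⟨Y, hY, hv, ((ih V M Y hY).2).mpr hφ⟩
  intro V M X hX
  obtain ⟨hs, hd⟩ := key ξ V M X hX
  refine ⟨hs, ?_, hd⟩
  simp only [Form.sat]
  rw [hs, hd]
end

section
/- C,X ⊨ K_a φ if and only if C,X ⋈ K_a φ and for all Y ∈ C with a ∈ χ(X∩Y), C,Y ⋈ φ implies C,Y ⊨ φ, where K_a φ := ¬K̂_a¬φ. -/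
theorem sat_K_iff {A V : Type} (M : SimpModel A V) (X : Finset V) (φ : Form A) (a : A)
    (hX : X ∈ M.C) :
    (Form.K a φ).sat M X ↔
      ((Form.K a φ).defd M X ∧
        ∀ Y ∈ M.C, (∃ v ∈ X, v ∈ Y ∧ M.χ v = a) → φ.defd M Y → φ.sat M Y) := by
  simp only [Form.K, Form.sat, Form.defd]
  constructor
  · rintro ⟨hd, hn⟩
    exact ⟨hd, fun Y hY hl hdf => by_contra fun hs => hn ⟨Y, hY, hl, hdf, hs⟩⟩
  · rintro ⟨hd, h⟩
    exact ⟨hd, fun ⟨Y, hY, hl, hdf, hs⟩ => hs (h Y hY hl hdf)⟩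
end

section
/- Truth is upwards monotone along faces: if C,X ⊨ φ and Y ∈ C with X ⊆ Y, then C,Y ⊨ φ. Moreover, simultaneously, if C,X ⊨ ¬φ and X ⊆ Y ∈ C, then C,Y ⊨ ¬φ. -/
lemma defd_mono {A V : Type} (M : SimpModel A V) (X Y : Finset V)
    (hXY : X ⊆ Y) : ∀ φ : Form A, φ.defd M X → φ.defd M Y := by
  intro φ
  induction φ with
  | atom a p => rintro ⟨v, hv, hc⟩; exact ⟨v, hXY hv, hc⟩
  | neg φ ih => exact ih
  | and φ ψ ih1 ih2 => rintro ⟨h1, h2⟩; exact ⟨ih1 h1, ih2 h2⟩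
  | hatK a φ ih =>
      rintro ⟨Z, hZ, ⟨v, hv, hvZ, hc⟩, hd⟩
      exact ⟨Z, hZ, ⟨v, hXY hv, hvZ, hc⟩, hd⟩

theorem sat_upward {A V : Type} (M : SimpModel A V) (X Y : Finset V) (φ : Form A)
    (hX : X ∈ M.C) (hY : Y ∈ M.C) (hXY : X ⊆ Y) :
    (φ.sat M X → φ.sat M Y) ∧ ((Form.neg φ).sat M X → (Form.neg φ).sat M Y) := by
  induction φ with
  | atom a p =>
      constructor
      · rintro ⟨v, hv, hc, hp⟩; exact ⟨v, hXY hv, hc, hp⟩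
      · rintro ⟨⟨v, hv, hc⟩, hns⟩
        refine ⟨⟨v, hXY hv, hc⟩, ?_⟩
        rintro ⟨w, hw, hcw, hp⟩
        have : v = w := M.chromatic Y hY v (hXY hv) w hw (hc.trans hcw.symm)
        exact hns ⟨v, hv, hc, this ▸ hp⟩
  | neg φ ih =>
      refine ⟨ih.2, ?_⟩
      rintro ⟨hd, hns⟩
      refine ⟨defd_mono M X Y hXY φ hd, ?_⟩
      rintro ⟨hdY, hnsY⟩
      have : φ.sat M X := by
        by_contra h
        exact hns ⟨hd, h⟩
      exact hnsY (ih.1 this)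
  | and φ ψ ih1 ih2 =>
      constructor
      · rintro ⟨h1, h2⟩; exact ⟨ih1.1 h1, ih2.1 h2⟩
      · rintro ⟨⟨hd1, hd2⟩, hns⟩
        refine ⟨⟨defd_mono M X Y hXY φ hd1, defd_mono M X Y hXY ψ hd2⟩, ?_⟩
        rintro ⟨hs1, hs2⟩
        rcases not_and_or.mp hns with h | h
        · exact (ih1.2 ⟨hd1, h⟩).2 hs1
        · exact (ih2.2 ⟨hd2, h⟩).2 hs2
  | hatK a φ ih =>
      constructor
      · rintro ⟨Z, hZ, ⟨v, hv, hvZ, hc⟩, hs⟩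
        exact ⟨Z, hZ, ⟨v, hXY hv, hvZ, hc⟩, hs⟩
      · rintro ⟨⟨Z, hZ, ⟨v, hv, hvZ, hc⟩, hd⟩, hns⟩
        refine ⟨⟨Z, hZ, ⟨v, hXY hv, hvZ, hc⟩, hd⟩, ?_⟩
        rintro ⟨W, hW, ⟨w, hw, hwW, hcw⟩, hsW⟩
        have : v = w := M.chromatic Y hY v (hXY hv) w hw (hc.trans hcw.symm)
        exact hns ⟨W, hW, ⟨v, hv, this ▸ hwW, hc⟩, hsW⟩
end

section
/- Truth is downwards monotone to definable faces: if C,X ⊨ φ, Y ∈ C with Y ⊆ X, and C,Y ⋈ φ, then C,Y ⊨ φ. -/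
lemma defd_up {A V : Type} (M : SimpModel A V) (φ : Form A) :
    ∀ X Y : Finset V, Y ⊆ X → φ.defd M Y → φ.defd M X := by
  induction φ with
  | atom a p => rintro X Y h ⟨v, hv, hc⟩; exact ⟨v, h hv, hc⟩
  | neg φ ih => exact fun X Y h hd => ih X Y h hd
  | and φ ψ ih1 ih2 => rintro X Y h ⟨h1, h2⟩; exact ⟨ih1 X Y h h1, ih2 X Y h h2⟩
  | hatK a φ ih => rintro X Y h ⟨Z, hZ, ⟨v, hv, hvZ, hc⟩, hd⟩
                   exact ⟨Z, hZ, ⟨v, h hv, hvZ, hc⟩, hd⟩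

lemma sat_both {A V : Type} (M : SimpModel A V) (φ : Form A) :
    (∀ X Y : Finset V, X ∈ M.C → Y ∈ M.C → Y ⊆ X →
      φ.sat M X → φ.defd M Y → φ.sat M Y) ∧
    (∀ X Y : Finset V, X ∈ M.C → Y ∈ M.C → Y ⊆ X →
      φ.sat M Y → φ.sat M X) := by
  induction φ with
  | atom a p =>
    constructor
    · rintro X Y hX hY hYX ⟨v, hv, hc, hp⟩ ⟨w, hw, hcw⟩
      have : v = w := M.chromatic X hX v hv w (hYX hw) (hc.trans hcw.symm)
      exact ⟨w, hw, hcw, this ▸ hp⟩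
    · rintro X Y _ _ hYX ⟨v, hv, hc, hp⟩; exact ⟨v, hYX hv, hc, hp⟩
  | neg φ ih =>
    obtain ⟨ihd, ihu⟩ := ih
    constructor
    · rintro X Y hX hY hYX ⟨hdX, hns⟩ hdY
      exact ⟨hdY, fun hs => hns (ihu X Y hX hY hYX hs)⟩
    · rintro X Y hX hY hYX ⟨hdY, hns⟩
      exact ⟨defd_up M φ X Y hYX hdY, fun hs => hns (ihd X Y hX hY hYX hs hdY)⟩
  | and φ ψ ih1 ih2 =>
    constructor
    · rintro X Y hX hY hYX ⟨h1, h2⟩ ⟨d1, d2⟩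
      exact ⟨ih1.1 X Y hX hY hYX h1 d1, ih2.1 X Y hX hY hYX h2 d2⟩
    · rintro X Y hX hY hYX ⟨h1, h2⟩
      exact ⟨ih1.2 X Y hX hY hYX h1, ih2.2 X Y hX hY hYX h2⟩
  | hatK a φ ih =>
    constructor
    · rintro X Y hX hY hYX ⟨Z, hZ, ⟨v, hv, hvZ, hc⟩, hs⟩ ⟨Z', hZ', ⟨w, hw, hwZ', hcw⟩, hd⟩
      have : v = w := M.chromatic X hX v hv w (hYX hw) (hc.trans hcw.symm)
      exact ⟨Z, hZ, ⟨w, hw, this ▸ hvZ, hcw⟩, hs⟩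
    · rintro X Y _ _ hYX ⟨Z, hZ, ⟨v, hv, hvZ, hc⟩, hs⟩
      exact ⟨Z, hZ, ⟨v, hYX hv, hvZ, hc⟩, hs⟩

theorem sat_downward {A V : Type} (M : SimpModel A V) (X Y : Finset V) (φ : Form A)
    (hX : X ∈ M.C) (hY : Y ∈ M.C) (hYX : Y ⊆ X)
    (h : φ.sat M X) (hdef : φ.defd M Y) : φ.sat M Y :=
  (sat_both M φ).1 X Y hX hY hYX h hdef
end

section
/- For C,X ⋈ φ, the following are equivalent: (i) C,X ⊨ φ; (ii) C,Y ⊨ φ for all faces Y ∈ star(X); (iii) C,Y ⊨ φ for all facets Y ∈ star(X). -/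
lemma mono_lemma {A V : Type} (M : SimpModel A V) (φ : Form A) :
    ∀ X Y : Finset V, X ∈ M.C → Y ∈ M.C → X ⊆ Y →
      ((φ.defd M X → φ.defd M Y) ∧ (φ.sat M X → φ.sat M Y) ∧
        (φ.defd M X → φ.sat M Y → φ.sat M X)) := by
  induction φ with
  | atom a p =>
    intro X Y hX hY hXY
    refine ⟨?_, ?_, ?_⟩
    · rintro ⟨v, hv, hχ⟩; exact ⟨v, hXY hv, hχ⟩
    · rintro ⟨v, hv, hχ, hp⟩; exact ⟨v, hXY hv, hχ, hp⟩
    · rintro ⟨v, hv, hχ⟩ ⟨w, hw, hχw, hp⟩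
      have : v = w := M.chromatic Y hY v (hXY hv) w hw (hχ.trans hχw.symm)
      exact ⟨v, hv, hχ, this ▸ hp⟩
  | neg φ ih =>
    intro X Y hX hY hXY
    obtain ⟨hd, hs, hdown⟩ := ih X Y hX hY hXY
    refine ⟨hd, ?_, ?_⟩
    · rintro ⟨h1, h2⟩; exact ⟨hd h1, fun h => h2 (hdown h1 h)⟩
    · rintro h1 ⟨h2, h3⟩; exact ⟨h1, fun h => h3 (hs h)⟩
  | and φ ψ ih1 ih2 =>
    intro X Y hX hY hXY
    obtain ⟨hd1, hs1, hdown1⟩ := ih1 X Y hX hY hXY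
    obtain ⟨hd2, hs2, hdown2⟩ := ih2 X Y hX hY hXY
    exact ⟨fun h => ⟨hd1 h.1, hd2 h.2⟩, fun h => ⟨hs1 h.1, hs2 h.2⟩,
      fun h h' => ⟨hdown1 h.1 h'.1, hdown2 h.2 h'.2⟩⟩
  | hatK a φ ih =>
    intro X Y hX hY hXY
    refine ⟨?_, ?_, ?_⟩
    · rintro ⟨Z, hZ, ⟨v, hv, hvZ, hχ⟩, hd⟩; exact ⟨Z, hZ, ⟨v, hXY hv, hvZ, hχ⟩, hd⟩
    · rintro ⟨Z, hZ, ⟨v, hv, hvZ, hχ⟩, hs⟩; exact ⟨Z, hZ, ⟨v, hXY hv, hvZ, hχ⟩, hs⟩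
    · rintro ⟨Z, hZ, ⟨v, hv, hvZ, hχ⟩, _⟩ ⟨Z', hZ', ⟨w, hw, hwZ', hχw⟩, hs⟩
      have : v = w := M.chromatic Y hY v (hXY hv) w hw (hχ.trans hχw.symm)
      exact ⟨Z', hZ', ⟨v, hv, this ▸ hwZ', hχ⟩, hs⟩

lemma card_le_of_mem {A V : Type} [Fintype A] (M : SimpModel A V) {Z : Finset V}
    (hZ : Z ∈ M.C) : Z.card ≤ Fintype.card A := by
  classical
  calc Z.card = (Z.image M.χ).card := by
        rw [Finset.card_image_of_injOn]
        exact fun v hv w hw h => M.chromatic Z hZ v hv w hw h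
    _ ≤ Fintype.card A := (Z.image M.χ).card_le_univ

lemma exists_facet {A V : Type} [Fintype A] (M : SimpModel A V) (X : Finset V)
    (hX : X ∈ M.C) : ∃ Y ∈ M.C, X ⊆ Y ∧ ∀ Z ∈ M.C, Y ⊆ Z → Z = Y := by
  classical
  have hP : ∃ n, n ≤ Fintype.card A ∧ ∃ Z ∈ M.C, X ⊆ Z ∧ Z.card = n :=
    ⟨X.card, card_le_of_mem M hX, X, hX, subset_rfl, rfl⟩
  set n := Nat.findGreatest (fun n => ∃ Z ∈ M.C, X ⊆ Z ∧ Z.card = n) (Fintype.card A)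
  obtain ⟨m, hm, hZm⟩ := hP
  have hn : ∃ Z ∈ M.C, X ⊆ Z ∧ Z.card = n :=
    Nat.findGreatest_spec (P := fun n => ∃ Z ∈ M.C, X ⊆ Z ∧ Z.card = n)
      hm hZm
  obtain ⟨Y, hY, hXY, hcard⟩ := hn
  refine ⟨Y, hY, hXY, fun Z hZ hYZ => ?_⟩
  have hle : Z.card ≤ n := by
    by_contra h
    exact Nat.findGreatest_is_greatest (lt_of_not_ge h) (card_le_of_mem M hZ)
      ⟨Z, hZ, hXY.trans hYZ, rfl⟩
  exact (Finset.eq_of_subset_of_card_le hYZ (hcard ▸ hle)).symm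

theorem sat_iff_star_iff_facets {A V : Type} [Fintype A] (M : SimpModel A V) (X : Finset V)
    (φ : Form A) (hX : X ∈ M.C) (hdef : φ.defd M X) :
    (φ.sat M X ↔ ∀ Y ∈ M.C, X ⊆ Y → φ.sat M Y) ∧
    (φ.sat M X ↔ ∀ Y ∈ M.C, X ⊆ Y → (∀ Z ∈ M.C, Y ⊆ Z → Z = Y) → φ.sat M Y) := by
  have key : ∀ Y ∈ M.C, X ⊆ Y → (φ.sat M Y ↔ φ.sat M X) := by
    intro Y hY hXY
    obtain ⟨_, hs, hdown⟩ := mono_lemma M φ X Y hX hY hXY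
    exact ⟨hdown hdef, hs⟩
  constructor
  · constructor
    · intro h Y hY hXY; exact (key Y hY hXY).mpr h
    · intro h; exact h X hX subset_rfl
  · constructor
    · intro h Y hY hXY _; exact (key Y hY hXY).mpr h
    · intro h
      obtain ⟨Y, hY, hXY, hfac⟩ := exists_facet M X hX
      exact (key Y hY hXY).mp (h Y hY hXY hfac)
end

section
/- For every formula φ, the formula φ^⊤ is valid, i.e., for every pointed simplicial model (C,X), if C,X ⋈ φ^⊤ then C,X ⊨ φ^⊤. -/
theorem top_valid {A : Type} (φ : Form A) : Form.Valid φ.top := by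
  induction φ with
  | atom a p =>
    intro V M X hX hd
    obtain ⟨hd1, hd2⟩ := hd
    refine ⟨⟨hd1, hd2⟩, ?_⟩
    rintro ⟨⟨hda, hsa⟩, ⟨hdn, hsn⟩⟩
    exact hsn ⟨hd1, hsa⟩
  | neg φ ih => exact ih
  | and φ ψ ihφ ihψ =>
    intro V M X hX hd
    exact ⟨ihφ V M X hX hd.1, ihψ V M X hX hd.2⟩
  | hatK a φ ih =>
    intro V M X hX hd
    obtain ⟨Y, hY, hw, hdY⟩ := hd
    exact ⟨Y, hY, hw, ih V M Y hY hdY⟩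
end

section
/- For every formula φ and pointed simplicial model (C,X): C,X ⋈ φ if and only if C,X ⋈ φ^⊤. -/
theorem defd_iff_defd_top {A V : Type} (M : SimpModel A V) (X : Finset V) (φ : Form A)
    (hX : X ∈ M.C) : φ.defd M X ↔ φ.top.defd M X := by
  induction φ generalizing X with
  | atom a p => simp [Form.top, Form.or', Form.defd]
  | neg φ ih => exact ih X hX
  | and φ ψ ihφ ihψ =>
      simp only [Form.top, Form.defd]
      exact and_congr (ihφ X hX) (ihψ X hX)
  | hatK a φ ih =>
      simp only [Form.top, Form.defd]
      constructor
      · rintro ⟨Y, hY, hv, hd⟩; exact ⟨Y, hY, hv, (ih Y hY).1 hd⟩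
      · rintro ⟨Y, hY, hv, hd⟩; exact ⟨Y, hY, hv, (ih Y hY).2 hd⟩
end

section
/- Every propositional tautology (Boolean formula valid in two-valued classical logic) is valid in the three-valued semantics on simplicial models: if φ is a Boolean combination of variables that is a classical tautology, then for all (C,X) with C,X ⋈ φ, we have C,X ⊨ φ. -/
/-- The propositional (Boolean) fragment: no modalities. -/
def Form.isProp {A : Type} : Form A → Prop
  | Form.atom _ _ => True
  | Form.neg φ => φ.isProp
  | Form.and φ ψ => φ.isProp ∧ ψ.isProp
  | Form.hatK _ _ => False

/-- Classical two-valued evaluation of a propositional formula under valuation `w`. -/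
def Form.evalProp {A : Type} (w : A → ℕ → Prop) : Form A → Prop
  | Form.atom a p => w a p
  | Form.neg φ => ¬ φ.evalProp w
  | Form.and φ ψ => φ.evalProp w ∧ ψ.evalProp w
  | Form.hatK _ _ => True


lemma sat_iff_eval {A V : Type} (M : SimpModel A V) (X : Finset V)
    (w : A → ℕ → Prop) (hw : ∀ a p, w a p ↔ ∃ v ∈ X, M.χ v = a ∧ p ∈ M.val v) :
    ∀ φ : Form A, φ.isProp → φ.defd M X → (φ.sat M X ↔ φ.evalProp w)
  | Form.atom a p, _, _ => by
      simp [Form.sat, Form.evalProp, hw]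
  | Form.neg φ, hp, hd => by
      have ih := sat_iff_eval M X w hw φ hp hd
      simp [Form.sat, Form.evalProp, ih, show Form.defd M φ X from hd]
  | Form.and φ ψ, hp, hd => by
      have ih1 := sat_iff_eval M X w hw φ hp.1 hd.1
      have ih2 := sat_iff_eval M X w hw ψ hp.2 hd.2
      simp [Form.sat, Form.evalProp, ih1, ih2]
  | Form.hatK a φ, hp, _ => hp.elim

theorem tautology_valid {A : Type} (φ : Form A) (hprop : φ.isProp)
    (htaut : ∀ w : A → ℕ → Prop, φ.evalProp w) : Form.Valid φ := by
  intro V M X _ hd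
  exact (sat_iff_eval M X (fun a p => ∃ v ∈ X, M.χ v = a ∧ p ∈ M.val v)
    (fun _ _ => Iff.rfl) φ hprop hd).2 (htaut _)
end

section
/- The locality axiom is valid: for every agent a and local variable p_a, ⊨ K_a p_a ∨ K_a ¬p_a, i.e., in every pointed simplicial model (C,X) where this formula is defined, it is true. Moreover, it is defined at X iff a ∈ χ(X). -/
lemma loc_defd {A : Type} (a : A) (q : ℕ) (V : Type) (M : SimpModel A V) (X : Finset V) :
    ((Form.or' (Form.K a (Form.atom a q)) (Form.K a (Form.neg (Form.atom a q)))).defd M X ↔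
      ∃ v ∈ X, M.χ v = a) := by
  simp only [Form.or', Form.K, Form.defd]
  constructor
  · rintro ⟨⟨Y, _, ⟨v, hvX, _, hva⟩, _⟩, -⟩
    exact ⟨v, hvX, hva⟩
  · rintro ⟨v, hvX, hva⟩
    refine ⟨⟨{v}, M.singletons v, ⟨v, hvX, Finset.mem_singleton_self v, hva⟩,
      v, Finset.mem_singleton_self v, hva⟩,
      ⟨{v}, M.singletons v, ⟨v, hvX, Finset.mem_singleton_self v, hva⟩,
      v, Finset.mem_singleton_self v, hva⟩⟩

theorem locality_valid {A : Type} (a : A) (q : ℕ) :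
    Form.Valid (Form.or' (Form.K a (Form.atom a q)) (Form.K a (Form.neg (Form.atom a q)))) ∧
    ∀ (V : Type) (M : SimpModel A V) (X : Finset V), X ∈ M.C →
      ((Form.or' (Form.K a (Form.atom a q)) (Form.K a (Form.neg (Form.atom a q)))).defd M X ↔
        ∃ v ∈ X, M.χ v = a) := by
  refine ⟨?_, fun V M X _ => loc_defd a q V M X⟩
  intro V M X hX hdef
  obtain ⟨v, hvX, hva⟩ := (loc_defd a q V M X).mp hdef
  have hdef' := hdef
  simp only [Form.or', Form.K] at hdef' ⊢
  show Form.defd M _ X ∧ ¬ _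
  refine ⟨hdef', ?_⟩
  rintro ⟨⟨hd1, hns1⟩, ⟨hd2, hns2⟩⟩
  by_cases hq : q ∈ M.val v
  · -- K a (atom a q) should hold, contradicting hns1
    apply hns1
    refine ⟨hd1, ?_⟩
    rintro ⟨Y, hY, ⟨u, huX, huY, hua⟩, ⟨w, hwY, hwa⟩, hnot⟩
    have huv : u = v := M.chromatic X hX u huX v hvX (hua.trans hva.symm)
    exact hnot ⟨v, huv ▸ huY, hva, hq⟩
  · -- K a (neg (atom a q)) should hold, contradicting hns2
    apply hns2
    refine ⟨hd2, ?_⟩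
    rintro ⟨Y, hY, ⟨u, huX, huY, hua⟩, hd3, hs3⟩
    have huv : u = v := M.chromatic X hX u huX v hvX (hua.trans hva.symm)
    have : Form.sat M (Form.atom a q) Y := by
      by_contra h
      exact hs3 ⟨hd3, h⟩
    obtain ⟨w, hwY, hwa, hwq⟩ := this
    have hwv : w = v := M.chromatic Y hY w hwY v (huv ▸ huY) (hwa.trans hva.symm)
    exact hq (hwv ▸ hwq)
end

section
/- The axioms T, 4, and 5 are valid in the three-valued semantics on simplicial models: ⊨ K_a φ → φ, ⊨ K_a φ → K_a K_a φ, and ⊨ K̂_a φ → K_a K̂_a φ (validity meaning: true whenever defined). -/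
theorem T_four_five_valid {A : Type} (a : A) (φ : Form A) :
    Form.Valid (Form.imp (Form.K a φ) φ) ∧
    Form.Valid (Form.imp (Form.K a φ) (Form.K a (Form.K a φ))) ∧
    Form.Valid (Form.imp (Form.hatK a φ) (Form.K a (Form.hatK a φ))) := by
  refine ⟨?_, ?_, ?_⟩
  · intro V M X hX hd
    refine ⟨hd, ?_⟩
    rintro ⟨⟨hdK, hKsat⟩, hdφ, hnφ⟩
    obtain ⟨Y, hY, ⟨v, hvX, hvY, hva⟩, hdφY⟩ := hdK
    exact hKsat ⟨X, hX, ⟨v, hvX, hvX, hva⟩, hdφ, hnφ⟩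
  · intro V M X hX hd
    refine ⟨hd, ?_⟩
    rintro ⟨⟨hdK, hKsat⟩, hdKK, hnKK⟩
    apply hnKK
    refine ⟨hdKK, ?_⟩
    rintro ⟨Y, hY, ⟨v, hvX, hvY, hva⟩, hdKY, hnKY⟩
    apply hnKY
    refine ⟨hdKY, ?_⟩
    rintro ⟨Z, hZ, ⟨w, hwY, hwZ, hwa⟩, hdφZ, hnφZ⟩
    have hvw : v = w := M.chromatic Y hY v hvY w hwY (hva.trans hwa.symm)
    exact hKsat ⟨Z, hZ, ⟨v, hvX, hvw ▸ hwZ, hva⟩, hdφZ, hnφZ⟩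
  · intro V M X hX hd
    refine ⟨hd, ?_⟩
    rintro ⟨⟨Y, hY, ⟨v, hvX, hvY, hva⟩, hsφY⟩, hdK, hnK⟩
    apply hnK
    refine ⟨hdK, ?_⟩
    rintro ⟨Z, hZ, ⟨w, hwX, hwZ, hwa⟩, hdhZ, hnhZ⟩
    have hvw : v = w := M.chromatic X hX v hvX w hwX (hva.trans hwa.symm)
    exact hnhZ ⟨Y, hY, ⟨w, hwZ, hvw ▸ hvY, hwa⟩, hsφY⟩
end

section
/- The modified modus ponens rule MP^⊤ preserves validity: if ⊨ φ → ψ and ⊨ φ, then ⊨ φ^⊤ → ψ. -/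
lemma defd_top {A V : Type} (M : SimpModel A V) (φ : Form A) (X : Finset V) :
    (Form.top φ).defd M X ↔ φ.defd M X := by
  induction φ generalizing X with
  | atom a p => simp [Form.top, Form.or', Form.defd]
  | neg φ ih => exact ih X
  | and φ ψ ihφ ihψ => simp [Form.top, Form.defd, ihφ, ihψ]
  | hatK a φ ih => simp [Form.top, Form.defd, ih]

theorem MPtop_preserves_validity {A : Type} (φ ψ : Form A)
    (h1 : Form.Valid (Form.imp φ ψ)) (h2 : Form.Valid φ) :
    Form.Valid (Form.imp φ.top ψ) := by
  intro V M X hX hd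
  obtain ⟨hdφ, hdψ⟩ : (Form.top φ).defd M X ∧ ψ.defd M X := hd
  have hdφ' : φ.defd M X := (defd_top M φ X).mp hdφ
  have hsφ : φ.sat M X := h2 V M X hX hdφ'
  have himp := h1 V M X hX ⟨hdφ', hdψ⟩
  refine ⟨⟨hdφ, hdψ⟩, ?_⟩
  rintro ⟨_, hdψ', hnsψ⟩
  exact himp.2 ⟨hsφ, hdψ', hnsψ⟩
end

section
/- Necessitation preserves validity: if φ is valid then K_a φ is valid, for every agent a. -/
theorem necessitation_preserves_validity {A : Type} (a : A) (φ : Form A)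
    (h : Form.Valid φ) : Form.Valid (Form.K a φ) := by
  intro V M X hX hd
  refine ⟨hd, ?_⟩
  rintro ⟨Y, hY, _, hdY, hnsY⟩
  exact hnsY (h V M Y hY hdY)
end

section
/- The modified K axiom is valid: ⊨ K_a(φ→ψ) → K_a φ → K_a(φ^⊤→ψ), i.e., in every pointed simplicial model where this formula is defined, it is true. -/
namespace Form

lemma defd_top {A V : Type} (M : SimpModel A V) (φ : Form A) :
    ∀ X, (Form.top φ).defd M X ↔ φ.defd M X := by
  induction φ with
  | atom a p => intro X; simp [Form.top, Form.or', Form.defd]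
  | neg φ ih => intro X; simpa [Form.top, Form.defd] using ih X
  | and φ ψ ih1 ih2 => intro X; simp [Form.top, Form.defd, ih1 X, ih2 X]
  | hatK a φ ih => intro X; simp [Form.top, Form.defd, fun Y => ih Y]

end Form

theorem Ktop_valid {A : Type} (a : A) (φ ψ : Form A) :
    Form.Valid (Form.imp (Form.K a (Form.imp φ ψ))
      (Form.imp (Form.K a φ) (Form.K a (Form.imp φ.top ψ)))) := by
  intro V M X hX hdef
  simp only [Form.imp, Form.K, Form.sat, Form.defd] at hdef ⊢
  obtain ⟨hd1, hd2, hd3⟩ := hdef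
  refine ⟨⟨hd1, hd2, hd3⟩, ?_⟩
  rintro ⟨⟨-, hP⟩, -, hcon⟩
  apply hcon
  refine ⟨⟨hd2, hd3⟩, ?_⟩
  rintro ⟨⟨-, hKφ⟩, -, hcon2⟩
  apply hcon2
  refine ⟨hd3, ?_⟩
  rintro ⟨Y, hY, ⟨v, hvX, hvY, hva⟩, ⟨⟨hdtop, hdψ⟩, hfalse⟩⟩
  have hdφ : φ.defd M Y := (Form.defd_top M φ Y).mp hdtop
  have hsφ : φ.sat M Y := by
    by_contra h
    exact hKφ ⟨Y, hY, ⟨v, hvX, hvY, hva⟩, hdφ, h⟩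
  have h3 : Form.sat M φ.top Y ∧ Form.defd M ψ Y ∧ ¬ Form.sat M ψ Y := by
    by_contra h
    exact hfalse ⟨⟨hdtop, hdψ⟩, h⟩
  exact hP ⟨Y, hY, ⟨v, hvX, hvY, hva⟩, ⟨hdφ, hdψ⟩,
    fun h => h.2 ⟨hsφ, hdψ, h3.2.2⟩⟩
end
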